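/- Let h : Matrix (Fin n) (Fin p) ℝ → ℝ, let τ ≥ 0 and L ≥ 0, and let X, Y be real n×p matrices with XᵀX = I_p and YᵀY = I_p. Suppose v is a real n×p matrix with ‖v‖_F ≤ L satisfying the weak-convexity subgradient inequality h(Z) ≥ h(X) + ⟨v, Z − X⟩_F − (τ/2)·‖Z − X‖_F² for all real n×p matrices Z. Then, with the tangent-space projection P_X(v) = v − X * (Xᵀ*v + vᵀ*X)/2, one has h(Y) ≥ h(X) + ⟨P_X(v), Y − X⟩_F − ((τ + L)/2)·‖Y − X‖_F². -/
import Mathlib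


open Matrix

/-- The Frobenius norm `‖A‖_F = √(trace (Aᵀ A))` of a real matrix. -/
noncomputable def frobNorm {m n : ℕ} (A : Matrix (Fin m) (Fin n) ℝ) : ℝ :=
  Real.sqrt (Aᵀ * A).trace

/-- The Frobenius inner product `⟨A, C⟩_F = trace (Aᵀ C)` on real matrices. -/
def frobInner {m n : ℕ} (A C : Matrix (Fin m) (Fin n) ℝ) : ℝ :=
  (Aᵀ * C).trace

section helpers
variable {m n : ℕ}

lemma frobInner_eq_sum (A B : Matrix (Fin m) (Fin n) ℝ) :
    frobInner A B = ∑ j, ∑ i, A i j * B i j := by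
  simp [frobInner, Matrix.trace, Matrix.mul_apply, Matrix.diag, Matrix.transpose_apply]

lemma frobInner_self_nonneg (A : Matrix (Fin m) (Fin n) ℝ) : 0 ≤ frobInner A A := by
  rw [frobInner_eq_sum]
  exact Finset.sum_nonneg fun j _ => Finset.sum_nonneg fun i _ => mul_self_nonneg _

lemma frobNorm_sq (A : Matrix (Fin m) (Fin n) ℝ) : frobNorm A ^ 2 = frobInner A A :=
  Real.sq_sqrt (frobInner_self_nonneg A)

lemma frobNorm_nonneg (A : Matrix (Fin m) (Fin n) ℝ) : 0 ≤ frobNorm A :=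
  Real.sqrt_nonneg _

lemma abs_frobInner_le (A B : Matrix (Fin m) (Fin n) ℝ) :
    |frobInner A B| ≤ frobNorm A * frobNorm B := by
  have h2 : (frobInner A B) ^ 2 ≤ frobInner A A * frobInner B B := by
    rw [frobInner_eq_sum A B, frobInner_eq_sum A A, frobInner_eq_sum B B]
    simp_rw [← Finset.sum_product', ← sq]
    exact Finset.sum_mul_sq_le_sq_mul_sq _ _ _
  calc |frobInner A B| = Real.sqrt ((frobInner A B) ^ 2) := (Real.sqrt_sq_eq_abs _).symm
    _ ≤ Real.sqrt (frobInner A A * frobInner B B) := Real.sqrt_le_sqrt h2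
    _ = frobNorm A * frobNorm B := by
        rw [← frobNorm_sq, ← frobNorm_sq, ← mul_pow,
          Real.sqrt_sq (mul_nonneg (frobNorm_nonneg A) (frobNorm_nonneg B))]

lemma frobInner_sub_left (A B C : Matrix (Fin m) (Fin n) ℝ) :
    frobInner (A - B) C = frobInner A C - frobInner B C := by
  simp [frobInner, Matrix.transpose_sub, Matrix.sub_mul]

lemma frobInner_smul_left (c : ℝ) (A C : Matrix (Fin m) (Fin n) ℝ) :
    frobInner (c • A) C = c * frobInner A C := by
  simp [frobInner, Matrix.transpose_smul, Matrix.smul_mul]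

end helpers

theorem riemannian_subgradient_inequality
    (n p : ℕ) (h : Matrix (Fin n) (Fin p) ℝ → ℝ)
    (τ L : ℝ) (hτ : 0 ≤ τ) (hL : 0 ≤ L)
    (X Y : Matrix (Fin n) (Fin p) ℝ)
    (hX : Xᵀ * X = 1) (hY : Yᵀ * Y = 1)
    (v : Matrix (Fin n) (Fin p) ℝ) (hv : frobNorm v ≤ L)
    (hsub : ∀ Z : Matrix (Fin n) (Fin p) ℝ,
      h Z ≥ h X + frobInner v (Z - X) - τ / 2 * frobNorm (Z - X) ^ 2) :
    h Y ≥ h X + frobInner (v - (2 : ℝ)⁻¹ • (X * (Xᵀ * v + vᵀ * X))) (Y - X)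
      - (τ + L) / 2 * frobNorm (Y - X) ^ 2 := by
  set E : Matrix (Fin n) (Fin p) ℝ := Y - X with hE
  set S : Matrix (Fin p) (Fin p) ℝ := Xᵀ * v + vᵀ * X with hS
  set D : Matrix (Fin p) (Fin p) ℝ := Eᵀ * E with hD
  have hSsymm : Sᵀ = S := by
    simp [hS, Matrix.transpose_add, Matrix.transpose_mul, add_comm]
  have hDsymm : Dᵀ = D := by
    simp [hD, Matrix.transpose_mul]
  -- key identity: XᵀE + EᵀX = -D
  have hkey : Xᵀ * E + Eᵀ * X = -D := by
    simp only [hD, hE, Matrix.transpose_sub, Matrix.mul_sub, Matrix.sub_mul, hX, hY]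
    abel
  -- frobInner (X*S) E = - frobInner v (X*D)
  have htrace : frobInner (X * S) E = - frobInner v (X * D) := by
    have h1 : frobInner (X * S) E = (S * (Xᵀ * E)).trace := by
      rw [frobInner, Matrix.transpose_mul, hSsymm, Matrix.mul_assoc]
    have h2 : (S * (Xᵀ * E)).trace = (S * (Eᵀ * X)).trace :=
      calc (S * (Xᵀ * E)).trace = ((S * (Xᵀ * E))ᵀ).trace := (Matrix.trace_transpose _).symm
        _ = ((Eᵀ * X) * S).trace := by
            rw [Matrix.transpose_mul, Matrix.transpose_mul, Matrix.transpose_transpose, hSsymm]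
        _ = (S * (Eᵀ * X)).trace := Matrix.trace_mul_comm _ _
    have h3 : (S * (Xᵀ * E)).trace =
        (2 : ℝ)⁻¹ * ((S * (Xᵀ * E)).trace + (S * (Eᵀ * X)).trace) := by
      rw [← h2]; ring
    have h4 : (S * (Xᵀ * E)).trace + (S * (Eᵀ * X)).trace = - (S * D).trace := by
      rw [← Matrix.trace_add, ← Matrix.mul_add, hkey]
      simp
    have h5 : (S * D).trace = 2 * frobInner v (X * D) := by
      have hB : ((vᵀ * X) * D).trace = frobInner v (X * D) := by
        rw [frobInner, Matrix.mul_assoc]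
      have hA : ((Xᵀ * v) * D).trace = frobInner v (X * D) := by
        have ht : ((Xᵀ * v) * D)ᵀ = Dᵀ * (vᵀ * X) := by
          simp [Matrix.transpose_mul]
        rw [← Matrix.trace_transpose ((Xᵀ * v) * D), ht, hDsymm, Matrix.trace_mul_comm, hB]
      rw [hS, Matrix.add_mul, Matrix.trace_add, hA, hB]
      ring
    rw [h1, h3, h4, h5]; ring
  -- trace D = ‖E‖²
  have htrD : D.trace = frobNorm E ^ 2 := by
    rw [frobNorm_sq]; rfl
  have htrDnonneg : 0 ≤ D.trace := htrD ▸ sq_nonneg _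
  -- ‖X*D‖ ≤ trace D
  have hXD : frobNorm (X * D) ≤ D.trace := by
    have hsq : frobNorm (X * D) ^ 2 = (D * D).trace := by
      rw [frobNorm_sq, frobInner, Matrix.transpose_mul, Matrix.mul_assoc,
        ← Matrix.mul_assoc Xᵀ X D, hX, Matrix.one_mul, hDsymm]
    have hDD : (D * D).trace ≤ D.trace ^ 2 := by
      have hentry : ∀ i j, D i j ^ 2 ≤ D i i * D j j := by
        intro i j
        have := Finset.sum_mul_sq_le_sq_mul_sq Finset.univ (fun k => E k i) (fun k => E k j)
        simpa [hD, Matrix.mul_apply, Matrix.transpose_apply, sq] using this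
      have hsym' : ∀ i j, D j i = D i j := fun i j => by
        conv_rhs => rw [← hDsymm]
        exact (Matrix.transpose_apply D i j).symm
      have : (D * D).trace = ∑ i, ∑ j, D i j ^ 2 := by
        simp only [Matrix.trace, Matrix.diag, Matrix.mul_apply]
        refine Finset.sum_congr rfl fun i _ => Finset.sum_congr rfl fun j _ => ?_
        rw [hsym' i j, sq]
      rw [this, Matrix.trace, sq, Finset.sum_mul_sum]
      exact Finset.sum_le_sum fun i _ => Finset.sum_le_sum fun j _ => hentry i j
    calc frobNorm (X * D) = Real.sqrt (frobNorm (X * D) ^ 2) :=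
          (Real.sqrt_sq (frobNorm_nonneg _)).symm
      _ ≤ Real.sqrt (D.trace ^ 2) := Real.sqrt_le_sqrt (by rw [hsq]; exact hDD)
      _ = D.trace := Real.sqrt_sq htrDnonneg
  -- bound: frobInner v (X*D) ≤ L * ‖E‖²
  have hbound : |frobInner v (X * D)| ≤ L * frobNorm E ^ 2 := by
    calc |frobInner v (X * D)| ≤ frobNorm v * frobNorm (X * D) := abs_frobInner_le _ _
      _ ≤ L * frobNorm E ^ 2 := by
          apply mul_le_mul hv (htrD ▸ hXD) (frobNorm_nonneg _) hL
  have hmain := hsub Y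
  have hlin : frobInner (v - (2 : ℝ)⁻¹ • (X * S)) E
      = frobInner v E + (2 : ℝ)⁻¹ * frobInner v (X * D) := by
    rw [frobInner_sub_left, frobInner_smul_left, htrace]; ring
  rw [hlin]
  have hfinal : (2 : ℝ)⁻¹ * frobInner v (X * D) ≤ L / 2 * frobNorm E ^ 2 := by
    have := (abs_le.mp hbound).2
    linarith
  linarith
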